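/- arXiv:1711.00488 — 2 statements merged into one kernel-verified Lean document; each statement's English description precedes it below -/
import Mathlib

section
/- For n ≥ 4, the graph L(n) is connected with diameter 3. -/
set_option linter.unusedVariables false

open SimpleGraph Finset

/-- Vertices of `H(n)`: subsets of `[n]` of size 1 or 2. -/
def HV (n : ℕ) := {s : Finset (Fin n) // s.card = 1 ∨ s.card = 2}

instance (n : ℕ) : DecidableEq (HV n) := Subtype.instDecidableEq
instance (n : ℕ) : Fintype (HV n) := Subtype.fintype _

/-- The graph `H(n)`: adjacency is strict inclusion. -/
def Hgraph (n : ℕ) : SimpleGraph (HV n) where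
  Adj x y := x.1 ⊂ y.1 ∨ y.1 ⊂ x.1
  symm := ⟨fun x y h => h.symm⟩
  loopless := ⟨fun x h => (ssubset_irrefl x.1) (h.elim id id)⟩

instance (n : ℕ) : DecidableRel (Hgraph n).Adj :=
  fun x y => inferInstanceAs (Decidable (_ ∨ _))

noncomputable instance (n : ℕ) : DecidableRel ((Hgraph n).lineGraph).Adj :=
  Classical.decRel _

def Hv1 {n : ℕ} (i : Fin n) : HV n := ⟨{i}, Or.inl (Finset.card_singleton i)⟩

def Hv2 {n : ℕ} (i j : Fin n) (h : i ≠ j) : HV n := ⟨{i, j}, Or.inr (Finset.card_pair h)⟩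

lemma Hadj12 {n : ℕ} (i j : Fin n) (h : i ≠ j) : (Hgraph n).Adj (Hv1 i) (Hv2 i j h) :=
  Or.inl (Finset.ssubset_iff_subset_ne.mpr ⟨by simp [Hv1, Hv2, Finset.singleton_subset_iff], by
    simp only [Hv1, Hv2]
    intro he
    apply h
    have : j ∈ ({i} : Finset (Fin n)) := by rw [he]; simp
    simpa [eq_comm] using this⟩)

/-- The vertex `[i, ij]` of the line graph `L(n)`, i.e. the edge `{{i},{i,j}}` of `H(n)`. -/
def edgeV {n : ℕ} (i j : Fin n) (h : i ≠ j) : (Hgraph n).edgeSet :=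
  ⟨s(Hv1 i, Hv2 i j h), (Hgraph n).mem_edgeSet.mpr (Hadj12 i j h)⟩

def permMap {n : ℕ} (α : Equiv.Perm (Fin n)) (s : HV n) : HV n :=
  ⟨s.1.image α, by rw [Finset.card_image_of_injective _ α.injective]; exact s.2⟩

def permHom {n : ℕ} (α : Equiv.Perm (Fin n)) : Hgraph n →g Hgraph n where
  toFun := permMap α
  map_rel' := by
    intro x y hxy
    rcases hxy with h | h
    · exact Or.inl ((Finset.image_ssubset_image α.injective).mpr h)
    · exact Or.inr ((Finset.image_ssubset_image α.injective).mpr h)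

/-- The map induced by a permutation `α` of `[n]` on the vertices of the line graph `L(n)`. -/
def permEdge {n : ℕ} (α : Equiv.Perm (Fin n)) :
    (Hgraph n).edgeSet → (Hgraph n).edgeSet :=
  (permHom α).mapEdgeSet

/-!
A vertex of `L(n)` is an edge `{{i}, {i, j}}` of `H(n)`, i.e. an ordered pair `(i, j)` of distinct
points, and `[i, ij]`, `[k, kl]` are adjacent exactly when they share the singleton (`i = k`) or
the pair (`i = l`, `j = k`). Hence any two vertices are joined by the walk
`[i, ij] – [i, ik] – [k, ki] – [k, kl]` of length at most 3, while for distinct `a, b, c` the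
vertices `[a, ab]` and `[c, cb]` are neither adjacent nor have a common neighbour.
-/

lemma Hv1_injective {n : ℕ} : Function.Injective (Hv1 : Fin n → HV n) := fun i k h => by
  simpa [Hv1] using congrArg Subtype.val h

lemma Hv1_ne_Hv2 {n : ℕ} (i : Fin n) {k l : Fin n} (hkl : k ≠ l) : Hv1 i ≠ Hv2 k l hkl := by
  intro h
  simpa [Hv1, Hv2, Finset.card_pair hkl] using congrArg (fun s : HV n => s.1.card) h

lemma Hv2_eq_Hv2_iff {n : ℕ} {i j k l : Fin n} (hij : i ≠ j) (hkl : k ≠ l) :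
    Hv2 i j hij = Hv2 k l hkl ↔ i = k ∧ j = l ∨ i = l ∧ j = k := by
  rw [← Set.pair_eq_pair_iff, ← Finset.coe_pair, ← Finset.coe_pair, Finset.coe_inj]
  exact Subtype.ext_iff

lemma edgeV_eq_edgeV_iff {n : ℕ} {i j k l : Fin n} (hij : i ≠ j) (hkl : k ≠ l) :
    edgeV i j hij = edgeV k l hkl ↔ i = k ∧ j = l := by
  have hne := Hv1_ne_Hv2 i hkl
  rw [edgeV, edgeV, Subtype.mk.injEq, Sym2.eq_iff, Hv1_injective.eq_iff, Hv2_eq_Hv2_iff]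
  grind

lemma exists_eq_Hv1_Hv2_of_ssubset {n : ℕ} {x y : HV n} (h : x.1 ⊂ y.1) :
    ∃ i j, ∃ hij : i ≠ j, x = Hv1 i ∧ y = Hv2 i j hij := by
  have hcard := Finset.card_lt_card h
  have hx : x.1.card = 1 := by rcases x.2 with hx | hx <;> rcases y.2 with hy | hy <;> omega
  have hy : y.1.card = 2 := by rcases y.2 with hy | hy <;> omega
  obtain ⟨i, hi⟩ := Finset.card_eq_one.mp hx
  obtain ⟨a, b, hab, hy⟩ := Finset.card_eq_two.mp hy
  have hiy : i ∈ ({a, b} : Finset (Fin n)) := hy ▸ h.subset (by simp [hi])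
  rcases Finset.mem_insert.mp hiy with rfl | hib
  · exact ⟨i, b, hab, Subtype.ext hi, Subtype.ext hy⟩
  · obtain rfl := Finset.mem_singleton.mp hib
    exact ⟨i, a, hab.symm, Subtype.ext hi, Subtype.ext (hy.trans (Finset.pair_comm a i))⟩

lemma exists_eq_edgeV {n : ℕ} (e : (Hgraph n).edgeSet) :
    ∃ i j, ∃ hij : i ≠ j, e = edgeV i j hij := by
  obtain ⟨e, he⟩ := e
  induction e using Sym2.ind with
  | _ x y =>
    rcases (Hgraph n).mem_edgeSet.mp he with h | h
    · obtain ⟨i, j, hij, rfl, rfl⟩ := exists_eq_Hv1_Hv2_of_ssubset h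
      exact ⟨i, j, hij, rfl⟩
    · obtain ⟨i, j, hij, rfl, rfl⟩ := exists_eq_Hv1_Hv2_of_ssubset h
      exact ⟨i, j, hij, Subtype.ext Sym2.eq_swap⟩

lemma lineGraph_adj_edgeV_iff {n : ℕ} {i j k l : Fin n} (hij : i ≠ j) (hkl : k ≠ l) :
    (Hgraph n).lineGraph.Adj (edgeV i j hij) (edgeV k l hkl) ↔
      i = k ∧ j ≠ l ∨ i = l ∧ j = k := by
  rw [lineGraph_adj_iff_exists, Ne, edgeV_eq_edgeV_iff]
  change _ ∧ (∃ v, v ∈ s(Hv1 i, Hv2 i j hij) ∧ v ∈ s(Hv1 k, Hv2 k l hkl)) ↔ _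
  simp only [Sym2.mem_iff, or_and_right, exists_or, exists_eq_left, Hv1_injective.eq_iff,
    Hv2_eq_Hv2_iff, Hv1_ne_Hv2 i hkl, (Hv1_ne_Hv2 k hij).symm]
  grind

lemma edist_edgeV_edgeV_le_one {n : ℕ} {i j l : Fin n} (hij : i ≠ j) (hil : i ≠ l) :
    (Hgraph n).lineGraph.edist (edgeV i j hij) (edgeV i l hil) ≤ 1 := by
  rw [edist_le_one_iff_adj_or_eq, lineGraph_adj_edgeV_iff, edgeV_eq_edgeV_iff]
  tauto

lemma lineGraph_adj_edgeV_swap {n : ℕ} {i j : Fin n} (hij : i ≠ j) :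
    (Hgraph n).lineGraph.Adj (edgeV i j hij) (edgeV j i hij.symm) :=
  (lineGraph_adj_edgeV_iff _ _).mpr (Or.inr ⟨rfl, rfl⟩)

lemma lineGraph_edist_le_three {n : ℕ} (e f : (Hgraph n).edgeSet) :
    (Hgraph n).lineGraph.edist e f ≤ 3 := by
  obtain ⟨i, j, hij, rfl⟩ := exists_eq_edgeV e
  obtain ⟨k, l, hkl, rfl⟩ := exists_eq_edgeV f
  by_cases hik : i = k
  · subst hik
    exact (edist_edgeV_edgeV_le_one hij hkl).trans (by norm_num)
  · calc (Hgraph n).lineGraph.edist (edgeV i j hij) (edgeV k l hkl)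
        ≤ (Hgraph n).lineGraph.edist (edgeV i j hij) (edgeV i k hik)
          + (Hgraph n).lineGraph.edist (edgeV i k hik) (edgeV k i (Ne.symm hik))
          + (Hgraph n).lineGraph.edist (edgeV k i (Ne.symm hik)) (edgeV k l hkl) :=
          (SimpleGraph.edist_triangle (v := edgeV k i (Ne.symm hik))).trans
            (by gcongr; exact SimpleGraph.edist_triangle)
      _ ≤ 1 + 1 + 1 := by
          gcongr
          · exact edist_edgeV_edgeV_le_one hij hik
          · exact edist_le_one_iff_adj_or_eq.mpr (Or.inl (lineGraph_adj_edgeV_swap hik))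
          · exact edist_edgeV_edgeV_le_one _ hkl
      _ = 3 := by norm_num

lemma three_le_lineGraph_edist {n : ℕ} {a b c : Fin n} (hab : a ≠ b) (hcb : c ≠ b)
    (hac : a ≠ c) : 3 ≤ (Hgraph n).lineGraph.edist (edgeV a b hab) (edgeV c b hcb) := by
  rw [show (3 : ℕ∞) = 2 + 1 by norm_num, ENat.add_one_le_iff (by decide), two_lt_edist_iff, Ne,
    edgeV_eq_edgeV_iff, lineGraph_adj_edgeV_iff, Set.eq_empty_iff_forall_notMem]
  refine ⟨by tauto, by tauto, fun e he => ?_⟩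
  obtain ⟨i, j, hij, rfl⟩ := exists_eq_edgeV e
  rw [mem_commonNeighbors, lineGraph_adj_edgeV_iff, lineGraph_adj_edgeV_iff] at he
  grind

lemma lineGraph_ediam_eq_three {n : ℕ} (hn : 3 ≤ n) : (Hgraph n).lineGraph.ediam = 3 := by
  have hab : (⟨0, by omega⟩ : Fin n) ≠ ⟨1, by omega⟩ := by simp [Fin.ext_iff]
  have hcb : (⟨2, by omega⟩ : Fin n) ≠ ⟨1, by omega⟩ := by simp [Fin.ext_iff]
  refine le_antisymm (ediam_le_of_edist_le lineGraph_edist_le_three) ?_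
  exact (three_le_lineGraph_edist hab hcb (by simp [Fin.ext_iff])).trans edist_le_ediam

/-- For `n ≥ 4`, the graph `L(n)` is connected with diameter 3. -/
theorem lineGraph_connected_diam (n : ℕ) (hn : 4 ≤ n) :
    ((Hgraph n).lineGraph).Connected ∧ ((Hgraph n).lineGraph).diam = 3 := by
  have hediam := lineGraph_ediam_eq_three (n := n) (by omega)
  have : Nonempty (Hgraph n).edgeSet :=
    ⟨edgeV ⟨0, by omega⟩ ⟨1, by omega⟩ (by simp [Fin.ext_iff])⟩
  exact ⟨connected_of_ediam_ne_top (by simp [hediam]), by simp [diam, hediam]⟩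
end

section
/- For n ≥ 2, the graph L(n) is vertex-transitive. -/
set_option linter.unusedVariables false

open SimpleGraph Finset

/-! A permutation of `[n]` acts on `H(n)` by automorphisms, hence on its line graph `L(n)`.
Every vertex of `L(n)` is an edge `{{i}, {i, j}}` of `H(n)`, determined by the ordered pair
`(i, j)` with `i ≠ j`, and the symmetric group is transitive on such ordered pairs. -/

theorem Equiv.Perm.exists_apply_eq_and_apply_eq {α : Type*} {i j k l : α} (hij : i ≠ j)
    (hkl : k ≠ l) : ∃ σ : Equiv.Perm α, σ i = k ∧ σ j = l := by
  obtain ⟨σ, hσ⟩ := Equiv.Perm.exists_extending_pair ![i, j] ![k, l]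
    (by simp [Function.Injective, Fin.forall_fin_two, hij, hij.symm])
    (by simp [Function.Injective, Fin.forall_fin_two, hkl, hkl.symm])
  exact ⟨σ, hσ 0, hσ 1⟩

namespace Hgraph

variable {n : ℕ}

def permIso (σ : Equiv.Perm (Fin n)) : Hgraph n ≃g Hgraph n where
  toEquiv := σ.finsetCongr.subtypeEquiv fun s => by simp
  map_rel_iff' {x y} := by
    change x.1.map _ ⊂ y.1.map _ ∨ y.1.map _ ⊂ x.1.map _ ↔ _
    simp only [map_ssubset_map, Hgraph]

@[simp]
theorem coe_permIso_apply (σ : Equiv.Perm (Fin n)) (x : HV n) :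
    (permIso σ x).1 = x.1.map σ.toEmbedding :=
  rfl

theorem permIso_Hv1 (σ : Equiv.Perm (Fin n)) (i : Fin n) : permIso σ (Hv1 i) = Hv1 (σ i) :=
  Subtype.ext (by rw [coe_permIso_apply]; simp [Hv1])

theorem permIso_Hv2 (σ : Equiv.Perm (Fin n)) {i j : Fin n} (h : i ≠ j) :
    permIso σ (Hv2 i j h) = Hv2 (σ i) (σ j) (σ.injective.ne h) :=
  Subtype.ext (by rw [coe_permIso_apply]; simp [Hv2])

theorem lineGraph_permIso_edgeV (σ : Equiv.Perm (Fin n)) {i j : Fin n} (h : i ≠ j) :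
    (permIso σ).lineGraph (edgeV i j h) = edgeV (σ i) (σ j) (σ.injective.ne h) :=
  Subtype.ext <| by
    change Sym2.map (permIso σ) s(Hv1 i, Hv2 i j h) = _
    rw [Sym2.map_mk, permIso_Hv1, permIso_Hv2]
    rfl

theorem exists_eq_Hv1_Hv2_of_ssubset {x y : HV n} (hxy : x.1 ⊂ y.1) :
    ∃ (i j : Fin n) (h : i ≠ j), x = Hv1 i ∧ y = Hv2 i j h := by
  obtain ⟨hx, hy⟩ : x.1.card = 1 ∧ y.1.card = 2 := by
    have := card_lt_card hxy; have := x.2; have := y.2; omega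
  obtain ⟨i, hi⟩ := card_eq_one.mp hx
  obtain ⟨a, b, hab, hyab⟩ := card_eq_two.mp hy
  have hiy : i ∈ y.1 := hxy.subset (by simp [hi])
  rw [hyab, mem_insert, mem_singleton] at hiy
  rcases hiy with rfl | rfl
  · exact ⟨i, b, hab, Subtype.ext hi, Subtype.ext hyab⟩
  · exact ⟨i, a, hab.symm, Subtype.ext hi, Subtype.ext (hyab.trans (pair_comm _ _))⟩

theorem exists_eq_edgeV (u : (Hgraph n).edgeSet) :
    ∃ (i j : Fin n) (h : i ≠ j), u = edgeV i j h := by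
  obtain ⟨e, he⟩ := u
  induction e with
  | h x y =>
    rcases he with hxy | hyx
    · obtain ⟨i, j, h, rfl, rfl⟩ := exists_eq_Hv1_Hv2_of_ssubset hxy
      exact ⟨i, j, h, rfl⟩
    · obtain ⟨i, j, h, rfl, rfl⟩ := exists_eq_Hv1_Hv2_of_ssubset hyx
      exact ⟨i, j, h, Subtype.ext Sym2.eq_swap⟩

end Hgraph

theorem lineGraph_vertex_transitive_general (n : ℕ) :
    ∀ u v : (Hgraph n).edgeSet, ∃ g : (Hgraph n).lineGraph ≃g (Hgraph n).lineGraph, g u = v := by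
  intro u v
  obtain ⟨i, j, hij, rfl⟩ := Hgraph.exists_eq_edgeV u
  obtain ⟨k, l, hkl, rfl⟩ := Hgraph.exists_eq_edgeV v
  obtain ⟨σ, rfl, rfl⟩ := Equiv.Perm.exists_apply_eq_and_apply_eq hij hkl
  exact ⟨(Hgraph.permIso σ).lineGraph, Hgraph.lineGraph_permIso_edgeV σ hij⟩

/-- For `n ≥ 2`, the graph `L(n)` is vertex-transitive. -/
theorem lineGraph_vertex_transitive (n : ℕ) (hn : 2 ≤ n) :
    ∀ u v : (Hgraph n).edgeSet, ∃ g : (Hgraph n).lineGraph ≃g (Hgraph n).lineGraph, g u = v :=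
  lineGraph_vertex_transitive_general n
end
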